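/- The families r(A) = z_{A,∅} and u(A) = z_{∅,A}, for A ranging over nonempty subsets of {1,...,n}, are related by Möbius inversion: u(B) = ∑_{D⊆B} (-1)^{|B|-|D|} r(D) and r(A) = ∑_{C⊆A} u(C), and each family forms a basis for the span T_n of the generators z_{A,i} of Q_n. -/

import Mathlib

/-!
The two families are related by Möbius inversion on the Boolean lattice. The additive relations
make `r(A)` independent of the ordering of `A`, so `r(A ∪ {i}) = r(A) + z_{A,i}`; hence every
generator is a difference of two `r`'s and the `r(A)` span `T_n`. For independence, map `Q_n` to
the trivial square-zero extension of `k` by the functions on subsets of `[n]`, sending `z_{A,i}`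
to the edge vector `e_{A∪{i}} - e_A`; the quadratic relations hold because all products vanish there, and
`r(A) ↦ e_A - e_∅`. The `u(A)` span the same space and are equally many, so they form a basis too.
-/

namespace QnPaper

/-- The defining relations of the quadratic algebra `Q_n`:
for `A ⊆ {1,…,n}` and distinct `i, j ∉ A`,
`z_{A∪{i},j} + z_{A,i} = z_{A∪{j},i} + z_{A,j}` and
`z_{A∪{i},j} * z_{A,i} = z_{A∪{j},i} * z_{A,j}`. -/
inductive QRel (k : Type) [Field k] (n : ℕ) :
    FreeAlgebra k (Finset (Fin n) × Fin n) → FreeAlgebra k (Finset (Fin n) × Fin n) → Prop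
  | add_rel (A : Finset (Fin n)) (i j : Fin n) (hi : i ∉ A) (hj : j ∉ A) (hij : i ≠ j) :
      QRel k n (FreeAlgebra.ι k (insert i A, j) + FreeAlgebra.ι k (A, i))
        (FreeAlgebra.ι k (insert j A, i) + FreeAlgebra.ι k (A, j))
  | mul_rel (A : Finset (Fin n)) (i j : Fin n) (hi : i ∉ A) (hj : j ∉ A) (hij : i ≠ j) :
      QRel k n (FreeAlgebra.ι k (insert i A, j) * FreeAlgebra.ι k (A, i))
        (FreeAlgebra.ι k (insert j A, i) * FreeAlgebra.ι k (A, j))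

/-- The quadratic algebra `Q_n`. -/
abbrev Q (k : Type) [Field k] (n : ℕ) := RingQuot (QRel k n)

/-- The generator `z_{A,i}` of `Q_n` (only meaningful when `i ∉ A`). -/
def z (k : Type) [Field k] (n : ℕ) (A : Finset (Fin n)) (i : Fin n) : Q k n :=
  RingQuot.mkAlgHom k (QRel k n) (FreeAlgebra.ι k (A, i))

/-- `rAux s [i₁,…,i_r] = z_{s,i₁} + z_{s∪{i₁},i₂} + ⋯`. -/
def rAux (k : Type) [Field k] (n : ℕ) (s : Finset (Fin n)) : List (Fin n) → Q k n
  | [] => 0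
  | a :: l => z k n s a + rAux k n (insert a s) l

/-- `r(A) = z_{A,∅}`, computed using the increasing ordering of `A`. -/
def rFin (k : Type) [Field k] (n : ℕ) (A : Finset (Fin n)) : Q k n :=
  rAux k n ∅ (A.sort (· ≤ ·))

/-- `u(B) = z_{∅,B} = ∑_{D ⊆ B} (-1)^{|B|-|D|} r(D)`. -/
def uFin (k : Type) [Field k] (n : ℕ) (B : Finset (Fin n)) : Q k n :=
  ∑ D ∈ B.powerset, (-1 : Q k n) ^ (B.card - D.card) * rFin k n D
/-- The span `T_n` of all generators `z_{A,i}` (`i ∉ A`). -/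
def Tn (k : Type) [Field k] (n : ℕ) : Submodule k (Q k n) :=
  Submodule.span k {x | ∃ (A : Finset (Fin n)) (i : Fin n), i ∉ A ∧ x = z k n A i}

section MoebiusInversion

open Finset

variable {α R : Type*} [DecidableEq α] [Ring R]

lemma sum_powerset_insert_neg_one_pow_mul (f : Finset α → R) {a : α} {C : Finset α}
    (ha : a ∉ C) :
    ∑ D ∈ (insert a C).powerset, (-1 : R) ^ (#(insert a C) - #D) * f D =
      ∑ D ∈ C.powerset, (-1 : R) ^ (#C - #D) * f (insert a D) -
        ∑ D ∈ C.powerset, (-1 : R) ^ (#C - #D) * f D := by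
  rw [sum_powerset_insert ha, card_insert_of_notMem ha, add_comm, sub_eq_add_neg,
    ← sum_neg_distrib]
  congr 1
  · refine sum_congr rfl fun D hD => ?_
    rw [card_insert_of_notMem fun h => ha (mem_powerset.mp hD h), Nat.succ_sub_succ]
  · refine sum_congr rfl fun D hD => ?_
    rw [Nat.succ_sub (card_le_card (mem_powerset.mp hD)), pow_succ, mul_neg_one, neg_mul]

theorem sum_powerset_sum_powerset_neg_one_pow_mul (f : Finset α → R) (A : Finset α) :
    ∑ C ∈ A.powerset, ∑ D ∈ C.powerset, (-1 : R) ^ (#C - #D) * f D = f A := by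
  induction A using Finset.induction_on generalizing f with
  | empty => simp
  | @insert a A ha ih =>
    have haC : ∀ C ∈ A.powerset, a ∉ C := fun C hC h => ha (mem_powerset.mp hC h)
    rw [sum_powerset_insert ha, ih f,
      sum_congr rfl fun C hC => sum_powerset_insert_neg_one_pow_mul f (haC C hC),
      sum_sub_distrib, ih f, ih (fun D => f (insert a D))]
    exact add_sub_cancel _ _

end MoebiusInversion

section Generators

variable (k : Type) [Field k] (n : ℕ)

lemma z_insert_add_z (s : Finset (Fin n)) {a b : Fin n} (ha : a ∉ s) (hb : b ∉ s)
    (hab : a ≠ b) :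
    z k n (insert a s) b + z k n s a = z k n (insert b s) a + z k n s b := by
  simpa only [z, map_add] using RingQuot.mkAlgHom_rel k (QRel.add_rel s a b ha hb hab)

lemma rAux_append (s : Finset (Fin n)) (l₁ l₂ : List (Fin n)) :
    rAux k n s (l₁ ++ l₂) = rAux k n s l₁ + rAux k n (s ∪ l₁.toFinset) l₂ := by
  induction l₁ generalizing s with
  | nil => simp [rAux]
  | cons a l ih =>
    rw [List.cons_append, rAux, rAux, ih, add_assoc, List.toFinset_cons, Finset.insert_union,
      Finset.union_insert]

lemma rAux_perm {l l' : List (Fin n)} (h : l.Perm l') (s : Finset (Fin n)) (hl : l.Nodup)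
    (hs : ∀ x ∈ l, x ∉ s) : rAux k n s l = rAux k n s l' := by
  induction h generalizing s with
  | nil => rfl
  | cons x _ ih =>
    rw [List.nodup_cons] at hl
    rw [rAux, rAux, ih _ hl.2 fun y hy => ?_]
    simpa [not_or] using ⟨fun hxy => hl.1 (hxy ▸ hy), hs y (List.mem_cons_of_mem _ hy)⟩
  | swap x y l =>
    have hyx : y ≠ x := fun h => (List.nodup_cons.mp hl).1 (h ▸ List.mem_cons_self)
    simp only [rAux, ← add_assoc]
    rw [add_comm (z k n s y), z_insert_add_z k n s (hs y (by simp)) (hs x (by simp)) hyx,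
      add_comm (z k n (insert x s) y), Finset.insert_comm]
  | trans p₁ _ ih₁ ih₂ =>
    rw [ih₁ s hl hs, ih₂ s (p₁.nodup_iff.mp hl) fun x hx => hs x (p₁.mem_iff.mpr hx)]

lemma rFin_empty : rFin k n ∅ = 0 := by
  simp [rFin, rAux]

lemma rFin_insert {A : Finset (Fin n)} {i : Fin n} (hi : i ∉ A) :
    rFin k n (insert i A) = rFin k n A + z k n A i := by
  have hperm : ((insert i A).sort (· ≤ ·)).Perm (A.sort (· ≤ ·) ++ [i]) := by
    refine List.perm_of_nodup_nodup_toFinset_eq (Finset.sort_nodup _ _) ?_ ?_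
    · simpa [List.nodup_append] using hi
    · ext x; simp
  rw [rFin, rAux_perm k n hperm ∅ (Finset.sort_nodup _ _) (by simp), rAux_append,
    Finset.sort_toFinset, Finset.empty_union]
  simp [rFin, rAux]

lemma rFin_mem_Tn (A : Finset (Fin n)) : rFin k n A ∈ Tn k n := by
  induction A using Finset.induction_on with
  | empty => simp [rFin_empty]
  | insert i A hi ih =>
    rw [rFin_insert k n hi]
    exact add_mem ih (Submodule.subset_span ⟨A, i, hi, rfl⟩)

lemma uFin_mem_Tn (B : Finset (Fin n)) : uFin k n B ∈ Tn k n := by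
  refine sum_mem fun D _ => ?_
  rcases neg_one_pow_eq_or (Q k n) (B.card - D.card) with h | h <;> rw [h]
  · simpa using rFin_mem_Tn k n D
  · simp [rFin_mem_Tn]

lemma rFin_eq_sum_uFin (A : Finset (Fin n)) :
    rFin k n A = ∑ C ∈ A.powerset, uFin k n C :=
  (sum_powerset_sum_powerset_neg_one_pow_mul (rFin k n) A).symm

lemma mem_span_range_nonempty {M : Type*} [AddCommGroup M] [Module k M]
    (f : Finset (Fin n) → M) (hf : f ∅ = 0) (A : Finset (Fin n)) :
    f A ∈ Submodule.span k (Set.range fun A : {A : Finset (Fin n) // A.Nonempty} => f A.1) := by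
  rcases A.eq_empty_or_nonempty with rfl | hA
  · simp [hf]
  · exact Submodule.subset_span ⟨⟨A, hA⟩, rfl⟩

lemma span_rFin :
    Submodule.span k (Set.range fun A : {A : Finset (Fin n) // A.Nonempty} => rFin k n A.1) =
      Tn k n := by
  refine le_antisymm (Submodule.span_le.mpr ?_) (Submodule.span_le.mpr ?_)
  · rintro _ ⟨A, rfl⟩
    exact rFin_mem_Tn k n A
  · rintro _ ⟨A, i, hi, rfl⟩
    rw [SetLike.mem_coe, ← add_sub_cancel_left (rFin k n A) (z k n A i), ← rFin_insert k n hi]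
    exact sub_mem (mem_span_range_nonempty k n _ (rFin_empty k n) _)
      (mem_span_range_nonempty k n _ (rFin_empty k n) _)

lemma span_uFin :
    Submodule.span k (Set.range fun A : {A : Finset (Fin n) // A.Nonempty} => uFin k n A.1) =
      Tn k n := by
  have uFin_empty : uFin k n ∅ = 0 := by simp [uFin, rFin_empty]
  refine le_antisymm (Submodule.span_le.mpr ?_) ?_
  · rintro _ ⟨A, rfl⟩
    exact uFin_mem_Tn k n A
  · rw [← span_rFin, Submodule.span_le]
    rintro _ ⟨A, rfl⟩
    dsimp only [SetLike.mem_coe]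
    rw [rFin_eq_sum_uFin]
    exact sum_mem fun C _ => mem_span_range_nonempty k n _ uFin_empty C

end Generators

section Representation

variable (k : Type) [Field k] (n : ℕ)

noncomputable def toTrivSqZeroExt : Q k n →ₐ[k] TrivSqZeroExt k (Finset (Fin n) → k) :=
  RingQuot.liftAlgHom k
    ⟨FreeAlgebra.lift k fun p : Finset (Fin n) × Fin n =>
        TrivSqZeroExt.inr (Pi.single (insert p.2 p.1) 1 - Pi.single p.1 1), by
      rintro _ _ (⟨A, i, j, -, -, -⟩ | ⟨A, i, j, -, -, -⟩)
      · simp only [map_add, FreeAlgebra.lift_ι_apply, ← TrivSqZeroExt.inr_add,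
          sub_add_sub_cancel, Finset.insert_comm]
      · simp only [map_mul, FreeAlgebra.lift_ι_apply, TrivSqZeroExt.inr_mul_inr]⟩

lemma toTrivSqZeroExt_z (A : Finset (Fin n)) (i : Fin n) :
    toTrivSqZeroExt k n (z k n A i) =
      TrivSqZeroExt.inr (Pi.single (insert i A) 1 - Pi.single A 1) := by
  rw [z, toTrivSqZeroExt, RingQuot.liftAlgHom_mkAlgHom_apply, FreeAlgebra.lift_ι_apply]

lemma toTrivSqZeroExt_rFin (A : Finset (Fin n)) :
    toTrivSqZeroExt k n (rFin k n A) = TrivSqZeroExt.inr (Pi.single A 1 - Pi.single ∅ 1) := by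
  induction A using Finset.induction_on with
  | empty => simp [rFin_empty]
  | insert i A hi ih =>
    rw [rFin_insert k n hi, map_add, ih, toTrivSqZeroExt_z, ← TrivSqZeroExt.inr_add,
      add_comm, sub_add_sub_cancel]

lemma linearIndependent_rFin :
    LinearIndependent k (fun A : {A : Finset (Fin n) // A.Nonempty} => rFin k n A.1) := by
  let restrict := LinearMap.funLeft k k (Subtype.val : {A : Finset (Fin n) // A.Nonempty} → _)
  refine LinearIndependent.of_comp
    (restrict ∘ₗ TrivSqZeroExt.sndHom k _ ∘ₗ (toTrivSqZeroExt k n).toLinearMap) ?_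
  convert Pi.linearIndependent_single_one {A : Finset (Fin n) // A.Nonempty} k with A
  ext B
  simp [restrict, toTrivSqZeroExt_rFin, Pi.single_apply, B.2.ne_empty, Subtype.ext_iff]

lemma linearIndependent_uFin :
    LinearIndependent k (fun A : {A : Finset (Fin n) // A.Nonempty} => uFin k n A.1) := by
  rw [linearIndependent_iff_card_eq_finrank_span, Set.finrank, span_uFin, ← span_rFin,
    ← Set.finrank, ← linearIndependent_iff_card_eq_finrank_span]
  exact linearIndependent_rFin k n

end Representation

/-- The families `r(A)` and `u(A)`, for nonempty `A`, are related by Möbius inversion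
and each forms a basis of `T_n`. -/
theorem stmt8 (k : Type) [Field k] (n : ℕ) :
    (∀ B : Finset (Fin n),
      uFin k n B = ∑ D ∈ B.powerset, (-1 : Q k n) ^ (B.card - D.card) * rFin k n D) ∧
    (∀ A : Finset (Fin n), rFin k n A = ∑ C ∈ A.powerset, uFin k n C) ∧
    LinearIndependent k (fun A : {A : Finset (Fin n) // A.Nonempty} => rFin k n A.1) ∧
    Submodule.span k
      (Set.range fun A : {A : Finset (Fin n) // A.Nonempty} => rFin k n A.1) = Tn k n ∧
    LinearIndependent k (fun A : {A : Finset (Fin n) // A.Nonempty} => uFin k n A.1) ∧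
    Submodule.span k
      (Set.range fun A : {A : Finset (Fin n) // A.Nonempty} => uFin k n A.1) = Tn k n :=
  ⟨fun _ => rfl, rFin_eq_sum_uFin k n, linearIndependent_rFin k n, span_rFin k n,
    linearIndependent_uFin k n, span_uFin k n⟩
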